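/- arXiv:2407.11931 — 9 statements merged into one kernel-verified Lean document; each statement's English description precedes it below -/
import Mathlib

section
/- If k ≤ m ≤ m' and the non-wrapping induced map F_{(m')} : F_2^{m'} → F_2^{m'-k+1} is balanced, then F_{(m)} : F_2^m → F_2^{m-k+1} is also balanced. -/
/-!
Truncating inputs to their first `m` bits and outputs to their first `m - k + 1` bits
intertwines `F_{(m')}` with `F_{(m)}`, and both truncations have all fibres of size
`2 ^ (m' - m)`. Counting the inputs of `F_{(m')}` lying over a fibre of `F_{(m)}` in two
ways gives `2 ^ (m' - m) * |F_{(m)}⁻¹(y)| = 2 ^ (m' - m) * 2 ^ (k - 1)`.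
-/

/-- The cyclic (shift-invariant, periodic boundary) map on `n` bits induced by a
Boolean function `f` on `k` bits. -/
def cyc {k n : ℕ} (f : (Fin k → Bool) → Bool) (x : Fin n → Bool) : Fin n → Bool :=
  fun i => f fun j => x ⟨(i.val + j.val) % n, Nat.mod_lt _ i.pos⟩

/-- The non-wrapping induced map `F_{(m)} : F_2^m → F_2^{m-k+1}`. -/
def ncyc {k m : ℕ} (hk : k ≤ m) (f : (Fin k → Bool) → Bool) (x : Fin m → Bool) :
    Fin (m - k + 1) → Bool :=
  fun i => f fun j => x ⟨i.val + j.val, by have h1 := i.isLt; have h2 := j.isLt; omega⟩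

open Finset

theorem card_filter_comp_eq_mul {α β : Type*} [Fintype α] [Fintype β] [DecidableEq β]
    {p : α → β} {c : ℕ} (hp : ∀ b, #{a | p a = b} = c) (P : β → Prop) [DecidablePred P] :
    #{a | P (p a)} = c * #{b | P b} := by
  rw [card_eq_sum_card_fiberwise (f := p) (t := {b | P b}) (fun a ha => by simpa using ha),
    mul_comm, ← smul_eq_mul, ← sum_const]
  refine sum_congr rfl fun b hb => ?_
  rw [filter_filter, ← hp b]
  congr 1
  ext a
  simp only [mem_filter, mem_univ, true_and] at hb ⊢
  exact ⟨fun h => h.2, fun h => ⟨h ▸ hb, h⟩⟩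

theorem card_filter_eq_of_comp_eq_comp {α α' β β' : Type*} [Fintype α] [Fintype α']
    [Fintype β'] [DecidableEq α] [DecidableEq β] [DecidableEq β']
    {g : α → β} {g' : α' → β'} {p : α' → α} {q : β' → β}
    (hcomm : ∀ x, q (g' x) = g (p x))
    {a N : ℕ} (ha : 0 < a) (hp : ∀ x, #{x' | p x' = x} = a) (hq : ∀ y, #{y' | q y' = y} = a)
    (hg' : ∀ y', #{x' | g' x' = y'} = N) (y : β) : #{x | g x = y} = N := by
  refine Nat.eq_of_mul_eq_mul_left ha ?_
  calc a * #{x | g x = y} = #{x' | g (p x') = y} := (card_filter_comp_eq_mul hp _).symm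
    _ = #{x' | q (g' x') = y} := by simp only [hcomm]
    _ = N * #{y' | q y' = y} := card_filter_comp_eq_mul hg' (q · = y)
    _ = a * N := by rw [hq, mul_comm]

theorem Fin.card_filter_take_eq {α : Type*} [Fintype α] [DecidableEq α] {m n : ℕ} (h : m ≤ n)
    (y : Fin m → α) : #{x : Fin n → α | Fin.take m h x = y} = Fintype.card α ^ (n - m) := by
  obtain ⟨d, rfl⟩ := Nat.exists_eq_add_of_le h
  have hfiber : ({x : Fin (m + d) → α | Fin.take m h x = y} : Finset _) =
      univ.image (Fin.append y) := by
    ext x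
    simp only [mem_filter, mem_univ, true_and, mem_image]
    constructor
    · rintro rfl
      exact ⟨fun i => x (Fin.natAdd m i), Fin.append_castAdd_natAdd⟩
    · rintro ⟨b, rfl⟩
      rw [Fin.take_append_left m le_rfl, Fin.take_eq_self]
  have hinj : Function.Injective (Fin.append y (n := d)) := fun b b' h =>
    funext fun i => by simpa using congrFun h (Fin.natAdd m i)
  rw [hfiber, card_image_of_injective _ hinj, card_univ,
    Fintype.card_fun, Fintype.card_fin, Nat.add_sub_cancel_left]

theorem stmt1 {k m m' : ℕ} (hk : k ≤ m) (hm : m ≤ m') (f : (Fin k → Bool) → Bool)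
    (hbal : ∀ y : Fin (m' - k + 1) → Bool,
      (Finset.univ.filter fun x : Fin m' → Bool => ncyc (le_trans hk hm) f x = y).card
        = 2 ^ (k - 1)) :
    ∀ y : Fin (m - k + 1) → Bool,
      (Finset.univ.filter fun x : Fin m → Bool => ncyc hk f x = y).card = 2 ^ (k - 1) := by
  have hm' : m - k + 1 ≤ m' - k + 1 := by omega
  -- `ncyc hk f (Fin.take m hm x)` and `Fin.take _ hm' (ncyc _ f x)` read the same windows of `x`
  refine card_filter_eq_of_comp_eq_comp (p := Fin.take m hm) (q := Fin.take _ hm') (fun _ => rfl)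
    (Nat.two_pow_pos (m' - m)) (fun _ => ?_) (fun _ => ?_) hbal
  · rw [Fin.card_filter_take_eq, Fintype.card_bool]
  · rw [Fin.card_filter_take_eq, Fintype.card_bool]
    congr 1
    omega
end

section
/- The number of Boolean functions f : F_2^k → F_2 that are of the form f(x) = h(x_1,...,x_{k-1}) ⊕ x_k with h depending on x_1, or of the form f(x) = x_1 ⊕ h'(x_2,...,x_k) with h' depending on x_k, and which satisfy f(0,...,0) = 0, is exactly 2^{2^{k-1}} − (3/2)·2^{2^{k-2}}. -/
/-- `h` depends on coordinate `i`. -/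
def BoolDependsOn {m : ℕ} (h : (Fin m → Bool) → Bool) (i : Fin m) : Prop :=
  ∃ x : Fin m → Bool, h x ≠ h (Function.update x i (!(x i)))

/-!
Both families are images of injective maps `h ↦ h(x₁,…,x_k) ⊕ x_{k+1}` and
`h' ↦ x₁ ⊕ h'(x₂,…,x_{k+1})`. A normalized Boolean function on `2^k` points either depends on a
given variable or factors through the face where that variable is `0`, so each family has
`P - Q` members, with `P = 2^{2^k-1}` and `Q = 2^{2^{k-1}-1}`. A function lies in both families
iff `h` is linear in `x₁`, and such normalized `h` are again determined by a normalized function on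
a face, so there are `Q` of them. Inclusion–exclusion gives `2(P - Q) - Q = 2^{2^k} - 3Q`.
-/

open Function

theorem Nat.card_subtype_apply_eq {α β : Type*} [Fintype α] [DecidableEq α] [Fintype β]
    [DecidableEq β] (a : α) (b : β) :
    Nat.card {f : α → β // f a = b} = Nat.card β ^ (Nat.card α - 1) := by
  rw [Nat.card_eq_fintype_card, Fintype.card_subtype, ← Fintype.piFinset_univ,
    Fintype.card_filter_piFinset_const_eq_of_mem _ _ (Finset.mem_univ b), Finset.card_univ,
    Nat.card_eq_fintype_card, Nat.card_eq_fintype_card]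

section Face

variable {ι : Type*} [Fintype ι] [DecidableEq ι]

theorem ncard_setOf_apply_false_eq_false :
    {h : (ι → Bool) → Bool | h (fun _ => false) = false}.ncard = 2 ^ (2 ^ Nat.card ι - 1) := by
  rw [← Nat.card_coe_set_eq]
  exact (Nat.card_subtype_apply_eq _ _).trans (by simp)

/-- With `t = false` these are the functions not depending on `xᵢ`, with `t x = x i` those
linear in `xᵢ`. -/
def faceRestrictEquiv (i : ι) (t : (ι → Bool) → Bool) (ht : ∀ x, x i = false → t x = false) :
    {h : (ι → Bool) → Bool //
        (∀ x, h x = xor (t x) (h (update x i false))) ∧ h (fun _ => false) = false} ≃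
      {g : {x : ι → Bool // x i = false} → Bool // g ⟨fun _ => false, rfl⟩ = false} where
  toFun h := ⟨fun x => h.1 x.1, h.2.2⟩
  invFun g := ⟨fun x => xor (t x) (g.1 ⟨update x i false, update_self ..⟩), by
    refine ⟨fun x => ?_, ?_⟩
    · simp only [ht _ (update_self ..), update_idem, Bool.false_xor]
    · simpa [ht, update_eq_self_iff] using g.2⟩
  left_inv h := Subtype.ext <| funext fun x => (h.2.1 x).symm
  right_inv g := Subtype.ext <| funext fun x => by
    have hx : update x.1 i false = x.1 := by rw [update_eq_self_iff, x.2]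
    simp only [ht _ x.2, hx, Bool.false_xor]

theorem ncard_setOf_forall_eq_xor_update (i : ι) (t : (ι → Bool) → Bool)
    (ht : ∀ x, x i = false → t x = false) :
    {h : (ι → Bool) → Bool |
        (∀ x, h x = xor (t x) (h (update x i false))) ∧ h (fun _ => false) = false}.ncard =
      2 ^ (2 ^ (Nat.card ι - 1) - 1) := by
  rw [← Nat.card_coe_set_eq]
  refine (Nat.card_congr (faceRestrictEquiv i t ht)).trans ?_
  rw [Nat.card_subtype_apply_eq, Nat.card_subtype_apply_eq]
  simp

def IsLinearIn (h : (ι → Bool) → Bool) (i : ι) : Prop :=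
  ∀ x, h x = xor (x i) (h (update x i false))

theorem ncard_setOf_isLinearIn (i : ι) :
    {h : (ι → Bool) → Bool | IsLinearIn h i ∧ h (fun _ => false) = false}.ncard =
      2 ^ (2 ^ (Nat.card ι - 1) - 1) :=
  ncard_setOf_forall_eq_xor_update i (· i) fun _ => id

end Face

section Dependence

variable {m : ℕ} {h : (Fin m → Bool) → Bool} {i : Fin m}

theorem IsLinearIn.boolDependsOn (hl : IsLinearIn h i) : BoolDependsOn h i :=
  ⟨fun _ => false, by simp [hl (update _ i _)]⟩

theorem not_boolDependsOn_iff : ¬BoolDependsOn h i ↔ ∀ x, h x = h (update x i false) := by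
  simp only [BoolDependsOn, not_exists, not_not]
  refine ⟨fun hd x => ?_, fun hd x => ?_⟩
  · cases hx : x i
    · rw [← hx, update_eq_self]
    · simpa [hx] using hd x
  · rw [hd (update x i _), update_idem, ← hd]

theorem ncard_setOf_not_boolDependsOn (i : Fin m) :
    {h : (Fin m → Bool) → Bool | ¬BoolDependsOn h i ∧ h (fun _ => false) = false}.ncard =
      2 ^ (2 ^ (m - 1) - 1) := by
  simpa [not_boolDependsOn_iff] using ncard_setOf_forall_eq_xor_update i (fun _ => false) fun _ _ => rfl

theorem ncard_setOf_boolDependsOn (i : Fin m) :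
    {h : (Fin m → Bool) → Bool | BoolDependsOn h i ∧ h (fun _ => false) = false}.ncard =
      2 ^ (2 ^ m - 1) - 2 ^ (2 ^ (m - 1) - 1) := by
  have hsplit := Set.ncard_inter_add_ncard_sdiff_eq_ncard
    {h : (Fin m → Bool) → Bool | h (fun _ => false) = false} {h | BoolDependsOn h i}
  rw [Set.inter_comm, Set.sdiff_eq_compl_inter, Set.compl_ofPred, ← Set.ofPred_and,
    ← Set.ofPred_and, ncard_setOf_not_boolDependsOn, ncard_setOf_apply_false_eq_false,
    Nat.card_eq_fintype_card, Fintype.card_fin] at hsplit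
  omega

end Dependence

section XorEmbeddings

variable {n : ℕ}

def xorLast (h : (Fin n → Bool) → Bool) (x : Fin (n + 1) → Bool) : Bool :=
  xor (h (Fin.init x)) (x (Fin.last n))

def xorFirst (h : (Fin n → Bool) → Bool) (x : Fin (n + 1) → Bool) : Bool :=
  xor (x 0) (h (Fin.tail x))

@[simp]
theorem xorLast_snoc_false (h : (Fin n → Bool) → Bool) (y : Fin n → Bool) :
    xorLast h (Fin.snoc y false) = h y := by
  simp [xorLast]

@[simp]
theorem xorFirst_cons_false (h : (Fin n → Bool) → Bool) (y : Fin n → Bool) :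
    xorFirst h (Fin.cons false y) = h y := by
  simp [xorFirst]

@[simp]
theorem xorLast_apply_false (h : (Fin n → Bool) → Bool) :
    xorLast h (fun _ => false) = h (fun _ => false) :=
  Bool.xor_false _

@[simp]
theorem xorFirst_apply_false (h : (Fin n → Bool) → Bool) :
    xorFirst h (fun _ => false) = h (fun _ => false) :=
  Bool.false_xor _

theorem xorLast_injective : Injective (xorLast (n := n)) := fun h h' e => by
  funext y
  rw [← xorLast_snoc_false h, ← xorLast_snoc_false h', e]

theorem xorFirst_injective : Injective (xorFirst (n := n)) := fun h h' e => by
  funext y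
  rw [← xorFirst_cons_false h, ← xorFirst_cons_false h', e]

theorem isLinearIn_xorLast_last (h : (Fin n → Bool) → Bool) :
    IsLinearIn (xorLast h) (Fin.last n) := fun x => by
  simp [xorLast, Fin.init_update_last, Bool.xor_comm]

theorem isLinearIn_xorFirst_zero (h : (Fin n → Bool) → Bool) : IsLinearIn (xorFirst h) 0 :=
  fun x => by simp [xorFirst, Fin.tail_update_zero]

theorem IsLinearIn.xorLast {h : (Fin n → Bool) → Bool} {j : Fin n} (hl : IsLinearIn h j) :
    IsLinearIn (xorLast h) j.castSucc := fun x => by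
  simp only [_root_.xorLast, Fin.init_update_castSucc, update_of_ne (Fin.castSucc_lt_last j).ne']
  rw [hl (Fin.init x), Bool.xor_assoc]
  rfl

theorem IsLinearIn.comp_snoc {f : (Fin (n + 1) → Bool) → Bool} {j : Fin n} (b : Bool)
    (hl : IsLinearIn f j.castSucc) : IsLinearIn (fun y => f (Fin.snoc y b)) j := fun y => by
  simpa [Fin.snoc_update] using hl (Fin.snoc y b)

theorem IsLinearIn.comp_cons {f : (Fin (n + 1) → Bool) → Bool} {j : Fin n} (b : Bool)
    (hl : IsLinearIn f j.succ) : IsLinearIn (fun y => f (Fin.cons b y)) j := fun y => by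
  simpa [Fin.cons_update] using hl (Fin.cons b y)

theorem IsLinearIn.eq_xorFirst {f : (Fin (n + 1) → Bool) → Bool} (hl : IsLinearIn f 0) :
    f = xorFirst fun y => f (Fin.cons false y) := funext fun x => by
  conv_lhs => rw [hl x, ← Fin.cons_self_tail x, Fin.update_cons_zero]
  rfl

end XorEmbeddings

section Families

variable {n : ℕ}

theorem mem_image_xorLast_iff {P : ((Fin n → Bool) → Bool) → Prop}
    {f : (Fin (n + 1) → Bool) → Bool} :
    f ∈ xorLast '' {h | P h ∧ h (fun _ => false) = false} ↔
      (∃ h, P h ∧ ∀ x, f x = xorLast h x) ∧ f (fun _ => false) = false := by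
  constructor
  · rintro ⟨h, ⟨hP, h0⟩, rfl⟩
    exact ⟨⟨h, hP, fun _ => rfl⟩, by simpa using h0⟩
  · rintro ⟨⟨h, hP, hf⟩, f0⟩
    obtain rfl : f = xorLast h := funext hf
    exact ⟨h, ⟨hP, by simpa using f0⟩, rfl⟩

theorem mem_image_xorFirst_iff {P : ((Fin n → Bool) → Bool) → Prop}
    {f : (Fin (n + 1) → Bool) → Bool} :
    f ∈ xorFirst '' {h | P h ∧ h (fun _ => false) = false} ↔
      (∃ h, P h ∧ ∀ x, f x = xorFirst h x) ∧ f (fun _ => false) = false := by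
  constructor
  · rintro ⟨h, ⟨hP, h0⟩, rfl⟩
    exact ⟨⟨h, hP, fun _ => rfl⟩, by simpa using h0⟩
  · rintro ⟨⟨h, hP, hf⟩, f0⟩
    obtain rfl : f = xorFirst h := funext hf
    exact ⟨h, ⟨hP, by simpa using f0⟩, rfl⟩

theorem image_xorLast_inter_image_xorFirst :
    xorLast '' {h | BoolDependsOn h 0 ∧ h (fun _ => false) = false} ∩
        xorFirst '' {h | BoolDependsOn h (Fin.last n) ∧ h (fun _ => false) = false} =
      xorLast '' {h | IsLinearIn h 0 ∧ h (fun _ => false) = false} := by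
  ext f
  constructor
  · rintro ⟨⟨h, ⟨-, h0⟩, rfl⟩, ⟨h', -, e⟩⟩
    have hf : IsLinearIn (xorLast h) (Fin.castSucc 0) := e ▸ isLinearIn_xorFirst_zero h'
    exact ⟨h, ⟨by simpa using hf.comp_snoc false, h0⟩, rfl⟩
  · rintro ⟨h, ⟨hl, h0⟩, rfl⟩
    have hf : IsLinearIn (xorLast h) 0 := hl.xorLast
    refine ⟨⟨h, ⟨hl.boolDependsOn, h0⟩, rfl⟩, ⟨_, ⟨?_, ?_⟩, hf.eq_xorFirst.symm⟩⟩
    · exact ((isLinearIn_xorLast_last h).comp_cons false).boolDependsOn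
    · simpa [h0] using (congrFun hf.eq_xorFirst fun _ => false).symm

end Families

/-- Counting the permutive functions `f : F_2^{k+1} → F_2` of full diameter
(of the form `h(x₁,…,x_k) ⊕ x_{k+1}` with `h` depending on `x₁`, or
`x₁ ⊕ h'(x₂,…,x_{k+1})` with `h'` depending on `x_{k+1}`) normalized by
`f(0,…,0) = 0`: there are exactly `2^{2^k} - 3·2^{2^{k-1}-1}` of them. -/
theorem stmt5 {k : ℕ} (hk : 1 ≤ k) :
    Nat.card {f : (Fin (k + 1) → Bool) → Bool //
      ((∃ h : (Fin k → Bool) → Bool, BoolDependsOn h ⟨0, hk⟩ ∧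
          ∀ x : Fin (k + 1) → Bool, f x = xor (h fun j => x j.castSucc) (x (Fin.last k))) ∨
       (∃ h' : (Fin k → Bool) → Bool, BoolDependsOn h' ⟨k - 1, by omega⟩ ∧
          ∀ x : Fin (k + 1) → Bool, f x = xor (x 0) (h' fun j => x j.succ))) ∧
      f (fun _ => false) = false} = 2 ^ 2 ^ k - 3 * 2 ^ (2 ^ (k - 1) - 1) := by
  obtain ⟨n, rfl⟩ : ∃ n, k = n + 1 := ⟨k - 1, by omega⟩
  set A := xorLast '' {h : (Fin (n + 1) → Bool) → Bool |
    BoolDependsOn h 0 ∧ h (fun _ => false) = false}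
  set B := xorFirst '' {h : (Fin (n + 1) → Bool) → Bool |
    BoolDependsOn h (Fin.last n) ∧ h (fun _ => false) = false}
  refine (Nat.card_congr (Equiv.subtypeEquivRight (q := (· ∈ A ∪ B)) fun f => ?_)).trans ?_
  · rw [Set.mem_union, mem_image_xorLast_iff, mem_image_xorFirst_iff, ← or_and_right]
    -- `⟨0, hk⟩` and `⟨n + 1 - 1, _⟩` are `0` and `Fin.last n` up to defeq
    rfl
  have hunion := Set.ncard_union_add_ncard_inter A B
  rw [image_xorLast_inter_image_xorFirst, Set.ncard_image_of_injective _ xorLast_injective,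
    Set.ncard_image_of_injective _ xorLast_injective,
    Set.ncard_image_of_injective _ xorFirst_injective, ncard_setOf_boolDependsOn,
    ncard_setOf_boolDependsOn, ncard_setOf_isLinearIn, Nat.card_eq_fintype_card,
    Fintype.card_fin] at hunion
  have h2P : 2 ^ 2 ^ (n + 1) = 2 * 2 ^ (2 ^ (n + 1) - 1) := by
    rw [← pow_succ', Nat.sub_add_cancel Nat.one_le_two_pow]
  have hQP : 2 ^ (2 ^ n - 1) ≤ 2 ^ (2 ^ (n + 1) - 1) :=
    Nat.pow_le_pow_right two_pos (Nat.sub_le_sub_right (Nat.pow_le_pow_right two_pos n.le_succ) 1)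
  change (A ∪ B).ncard = _
  simp only [Nat.add_sub_cancel] at hunion ⊢
  omega
end

section
/- Let f : F_2^k → F_2 be an almost lifting, i.e., ℓ(f) = sup_{n≥k} max_{y∈F_2^n} |F^{-1}(y)| < ∞. Then for every m ≥ k and every y ∈ F_2^{m-k+1}, the non-wrapping induced map satisfies |F_{(m)}^{-1}(y)| ≤ ℓ(f)·2^{k-1}. -/
/-- If the fibers of all cyclic induced maps of `f` are bounded by `L` (in
particular if `f` is an almost lifting with `ℓ(f) ≤ L`), then every fiber of every
non-wrapping induced map has size at most `L·2^{k-1}`. -/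
theorem stmt6 {k : ℕ} (f : (Fin k → Bool) → Bool) (L : ℕ)
    (hL : ∀ n : ℕ, k ≤ n → ∀ y : Fin n → Bool,
      (Finset.univ.filter fun x : Fin n → Bool => cyc f x = y).card ≤ L) :
    ∀ (m : ℕ) (hm : k ≤ m) (y : Fin (m - k + 1) → Bool),
      (Finset.univ.filter fun x : Fin m → Bool => ncyc hm f x = y).card ≤ L * 2 ^ (k - 1) := by
  intro m hm y
  classical
  -- extend `y` by a boundary pattern `w` to a target for the cyclic map
  set g : (Fin (k - 1) → Bool) → Fin m → Bool := fun w i =>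
    if h : i.val < m - k + 1 then y ⟨i.val, h⟩
    else w ⟨i.val - (m - k + 1), by have := i.isLt; omega⟩ with hg
  have key : (Finset.univ.filter fun x : Fin m → Bool => ncyc hm f x = y) ⊆
      Finset.univ.biUnion (fun w : Fin (k - 1) → Bool =>
        Finset.univ.filter fun x : Fin m → Bool => cyc f x = g w) := by
    intro x hx
    simp only [Finset.mem_filter, Finset.mem_univ, true_and] at hx
    refine Finset.mem_biUnion.mpr
      ⟨fun j => cyc f x ⟨m - k + 1 + j.val, by have := j.isLt; omega⟩, Finset.mem_univ _, ?_⟩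
    simp only [Finset.mem_filter, Finset.mem_univ, true_and, hg]
    funext i
    by_cases h : i.val < m - k + 1
    · simp only [dif_pos h]
      have h2 := congrFun hx ⟨i.val, h⟩
      rw [← h2]
      show cyc f x i = ncyc hm f x ⟨i.val, h⟩
      unfold cyc ncyc
      congr 1
      funext j
      congr 1
      exact Fin.ext (Nat.mod_eq_of_lt (by have := j.isLt; omega))
    · simp only [dif_neg h]
      show cyc f x i = cyc f x ⟨m - k + 1 + (i.val - (m - k + 1)), _⟩
      apply congrArg
      apply Fin.ext
      show i.val = m - k + 1 + (i.val - (m - k + 1))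
      omega
  calc (Finset.univ.filter fun x : Fin m → Bool => ncyc hm f x = y).card
      ≤ (Finset.univ.biUnion (fun w : Fin (k - 1) → Bool =>
          Finset.univ.filter fun x : Fin m → Bool => cyc f x = g w)).card :=
        Finset.card_le_card key
    _ ≤ ∑ w : Fin (k - 1) → Bool,
          (Finset.univ.filter fun x : Fin m → Bool => cyc f x = g w).card :=
        Finset.card_biUnion_le
    _ ≤ ∑ _w : Fin (k - 1) → Bool, L :=
        Finset.sum_le_sum fun w _ => hL m hm (g w)
    _ = L * 2 ^ (k - 1) := by
        simp [Finset.sum_const, mul_comm]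
end

section
/- Let f : F_2^k → F_2. Then f is an almost lifting (i.e., sup_{n≥k} max_y |F^{-1}(y)| < ∞) if and only if the non-wrapping induced map F_{(m)} : F_2^m → F_2^{m-k+1} is balanced for every m ≥ k. -/
/-!
If every fiber of `F_{(m)}` has `2^(k-1)` points, periodic extension to length `n + k - 1` embeds
each fiber of the cyclic map on `n` bits into a fiber of `F_{(n+k-1)}`, so all cyclic fibers have
at most `2^(k-1)` points.

Conversely, the fibers of `F_{(m)}` have average size `2^(k-1)`, so if they are not all of that
size, some fiber over `y₀` has `c > 2^(k-1)` points. Concatenating `t` words of that fiber gives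
`c^t` cyclic words of length `t m` whose images agree with `y₀` on the first `m - k + 1` positions
of every block, hence take at most `2^((k-1) t)` values. Some cyclic fiber therefore has at least
`(c / 2^(k-1))^t` points, which is unbounded in `t`.
-/

open Finset Function

section FiberCounting

variable {α β : Type*} [Fintype α] [Fintype β] [DecidableEq β]

lemma card_eq_mul_of_card_fiber_eq (g : α → β) {a : ℕ} (h : ∀ y, #{x | g x = y} = a) :
    Fintype.card α = Fintype.card β * a := by
  rw [← card_univ, card_eq_sum_card_fiberwise (f := g) (t := univ) fun _ _ => mem_univ _,
    sum_const_nat fun y _ => h y, card_univ]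

lemma exists_lt_card_fiber_of_card_eq_mul (g : α → β) {a : ℕ}
    (hcard : Fintype.card α = Fintype.card β * a) {y : β} (hy : #{x | g x = y} ≠ a) :
    ∃ y₀, a < #{x | g x = y₀} := by
  by_contra! hle
  have hsum : ∑ y, #{x | g x = y} = ∑ _y : β, a := by
    rw [← card_eq_sum_card_fiberwise fun _ _ => mem_univ _, sum_const, smul_eq_mul, card_univ,
      card_univ, hcard]
  exact hy ((sum_eq_sum_iff_of_le fun y _ => hle y).mp hsum y (mem_univ y))

end FiberCounting

lemma le_of_forall_pow_le_mul_pow {a c L : ℕ} (h : ∀ t, 0 < t → c ^ t ≤ L * a ^ t) : c ≤ a := by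
  by_contra! hac
  rcases Nat.eq_zero_or_pos a with rfl | ha
  · simpa using (h 1 one_pos).trans_lt' (by simpa using hac)
  obtain ⟨t, ht⟩ := pow_unbounded_of_one_lt (L : ℚ)
    ((one_lt_div (by positivity)).mpr (by exact_mod_cast hac) : 1 < (c : ℚ) / a)
  rw [div_pow, lt_div_iff₀ (by positivity)] at ht
  have ht' : L * a ^ t < c ^ t := by exact_mod_cast ht
  have := h (t + 1) t.succ_pos
  rw [pow_succ, pow_succ, ← mul_assoc] at this
  nlinarith [Nat.mul_lt_mul_of_pos_right ht' ha, Nat.mul_le_mul_left (c ^ t) hac.le]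

section Blocks

variable {α : Type*} {t m : ℕ}

def blocks : (Fin (t * m) → α) ≃ (Fin t → Fin m → α) :=
  (finProdFinEquiv.arrowCongr (Equiv.refl α)).symm.trans (Equiv.curry _ _ _)

lemma blocks_apply (x : Fin (t * m) → α) (j : Fin t) (p : Fin m) :
    blocks x j p = x (finProdFinEquiv (j, p)) := rfl

lemma card_filter_forall_blocks_mem [Fintype α] [DecidableEq α] (S : Finset (Fin m → α)) :
    #{x : Fin (t * m) → α | ∀ j, blocks x j ∈ S} = #S ^ t := by
  rw [card_equiv blocks (t := Fintype.piFinset fun _ => S) (by simp),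
    Fintype.card_piFinset_const]

end Blocks

section CyclicBlocks

variable {k m t : ℕ}

lemma blocks_cyc_of_lt (hm : k ≤ m) (f : (Fin k → Bool) → Bool) (x : Fin (t * m) → Bool)
    (j : Fin t) {p : Fin m} (hp : p.val < m - k + 1) :
    blocks (cyc f x) j p = ncyc hm f (blocks x j) ⟨p, hp⟩ := by
  simp only [blocks_apply, cyc, ncyc]
  congr 1
  funext q
  congr 1
  ext
  have : m * j + m ≤ t * m := by nlinarith [j.isLt]
  simp only [finProdFinEquiv_apply_val]
  rw [Nat.mod_eq_of_lt (by omega)]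
  omega

def blockTails (hm : k ≤ m) (Y : Fin (t * m) → Bool) : Fin t → Fin (k - 1) → Bool :=
  fun j q => blocks Y j ⟨m - k + 1 + q, by omega⟩

lemma cyc_eq_of_blockTails_eq (hm : k ≤ m) (f : (Fin k → Bool) → Bool)
    {y₀ : Fin (m - k + 1) → Bool} {x x' : Fin (t * m) → Bool}
    (hx : ∀ j, ncyc hm f (blocks x j) = y₀) (hx' : ∀ j, ncyc hm f (blocks x' j) = y₀)
    (htails : blockTails hm (cyc f x) = blockTails hm (cyc f x')) :
    cyc f x = cyc f x' := by
  refine blocks.injective (funext fun j => funext fun p => ?_)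
  by_cases hp : p.val < m - k + 1
  · rw [blocks_cyc_of_lt hm f x j hp, blocks_cyc_of_lt hm f x' j hp, hx, hx']
  · have htail := congrFun (congrFun htails j) ⟨p - (m - k + 1), by omega⟩
    have hpos : (⟨m - k + 1 + (p - (m - k + 1)), by omega⟩ : Fin m) = p := by ext; simp; omega
    simpa only [blockTails, hpos] using htail

lemma pow_card_ncyc_fiber_le (hm : k ≤ m) (f : (Fin k → Bool) → Bool)
    (y₀ : Fin (m - k + 1) → Bool) {L : ℕ}
    (hL : ∀ Y : Fin (t * m) → Bool, #{x | cyc f x = Y} ≤ L) :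
    #{w | ncyc hm f w = y₀} ^ t ≤ L * (2 ^ (k - 1)) ^ t := by
  set A : Finset (Fin (t * m) → Bool) :=
    {x | ∀ j, blocks x j ∈ ({w | ncyc hm f w = y₀} : Finset _)}
  have hfiber : ∀ z, #{x ∈ A | blockTails hm (cyc f x) = z} ≤ L := by
    intro z
    rcases eq_empty_or_nonempty {x ∈ A | blockTails hm (cyc f x) = z} with hempty | ⟨x₀, hx₀⟩
    · simp [hempty]
    refine (card_le_card fun x hx => ?_).trans (hL (cyc f x₀))
    simp only [A, mem_filter, mem_univ, true_and] at hx hx₀ ⊢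
    exact cyc_eq_of_blockTails_eq hm f hx.1 hx₀.1 (hx.2.trans hx₀.2.symm)
  calc #{w | ncyc hm f w = y₀} ^ t = #A := (card_filter_forall_blocks_mem _).symm
    _ ≤ L * #(univ : Finset (Fin t → Fin (k - 1) → Bool)) :=
      card_le_mul_card_image_of_maps_to (fun _ _ => mem_univ _) L fun z _ => hfiber z
    _ = L * (2 ^ (k - 1)) ^ t := by simp

end CyclicBlocks

section Periodize

variable {α : Type*} {n : ℕ}

def periodize (hn : 0 < n) (m : ℕ) (x : Fin n → α) : Fin m → α :=
  fun i => x ⟨i % n, Nat.mod_lt _ hn⟩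

lemma periodize_injective (hn : 0 < n) {m : ℕ} (hnm : n ≤ m) :
    Injective (periodize hn m : (Fin n → α) → Fin m → α) := by
  intro x x' h
  funext i
  simpa [periodize, Nat.mod_eq_of_lt i.isLt] using congrFun h ⟨i, by omega⟩

lemma ncyc_periodize (hn : 0 < n) {k m : ℕ} (hm : k ≤ m) (f : (Fin k → Bool) → Bool)
    (x : Fin n → Bool) :
    ncyc hm f (periodize hn m x) = periodize hn (m - k + 1) (cyc f x) := by
  funext p
  simp only [ncyc, cyc, periodize, Nat.mod_add_mod]

lemma card_cyc_fiber_le_card_ncyc_fiber (hn : 0 < n) {k m : ℕ} (hnm : n ≤ m) (hm : k ≤ m)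
    (f : (Fin k → Bool) → Bool) (y : Fin n → Bool) :
    #{x | cyc f x = y} ≤ #{w | ncyc hm f w = periodize hn (m - k + 1) y} := by
  refine card_le_card_of_injOn (periodize hn m) (fun x hx => ?_)
    (periodize_injective hn hnm).injOn
  simp only [mem_coe, mem_filter, mem_univ, true_and] at hx ⊢
  rw [ncyc_periodize, hx]

end Periodize

lemma pos_of_card_cyc_fiber_le {k L : ℕ} (f : (Fin k → Bool) → Bool)
    (hL : ∀ n, k ≤ n → ∀ y : Fin n → Bool, #{x | cyc f x = y} ≤ L) : 0 < k := by
  by_contra! hk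
  obtain rfl : k = 0 := by omega
  have hconst : ∀ x : Fin L → Bool, cyc f x = cyc f (fun _ => false) :=
    fun x => funext fun i => congrArg f (Subsingleton.elim _ _)
  have := hL L (Nat.zero_le L) (cyc f fun _ => false)
  simp only [hconst, filter_true, card_univ, Fintype.card_pi, Fintype.card_bool, prod_const,
    Fintype.card_fin] at this
  exact (Nat.lt_two_pow_self).not_ge this

lemma pos_of_card_ncyc_fiber_eq {k : ℕ} (f : (Fin k → Bool) → Bool)
    (hbal : ∀ y, #{x | ncyc le_rfl f x = y} = 2 ^ (k - 1)) : 0 < k := by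
  have := card_eq_mul_of_card_fiber_eq (ncyc le_rfl f) hbal
  simp only [Fintype.card_fun, Fintype.card_bool, Fintype.card_fin] at this
  by_contra! hk
  obtain rfl : k = 0 := by omega
  simp at this

/-- `f` is an almost lifting (the fiber sizes of all cyclic induced maps are
uniformly bounded) iff every non-wrapping induced map `F_{(m)}`, `m ≥ k`, is balanced. -/
theorem stmt8 {k : ℕ} (f : (Fin k → Bool) → Bool) :
    (∃ L : ℕ, ∀ n : ℕ, k ≤ n → ∀ y : Fin n → Bool,
        (Finset.univ.filter fun x : Fin n → Bool => cyc f x = y).card ≤ L) ↔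
    (∀ (m : ℕ) (hm : k ≤ m) (y : Fin (m - k + 1) → Bool),
        (Finset.univ.filter fun x : Fin m → Bool => ncyc hm f x = y).card = 2 ^ (k - 1)) := by
  constructor
  · rintro ⟨L, hL⟩ m hm y
    have hk := pos_of_card_cyc_fiber_le f hL
    by_contra hy
    have hcard :
        Fintype.card (Fin m → Bool) = Fintype.card (Fin (m - k + 1) → Bool) * 2 ^ (k - 1) := by
      simp only [Fintype.card_fun, Fintype.card_bool, Fintype.card_fin, ← pow_add]
      congr 1
      omega
    obtain ⟨y₀, hy₀⟩ := exists_lt_card_fiber_of_card_eq_mul (ncyc hm f) hcard hy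
    refine hy₀.not_ge (le_of_forall_pow_le_mul_pow (L := L) fun t ht => ?_)
    exact pow_card_ncyc_fiber_le hm f y₀ (hL (t * m) (hm.trans (Nat.le_mul_of_pos_left m ht)))
  · intro hbal
    have hk := pos_of_card_ncyc_fiber_eq f (hbal k le_rfl)
    refine ⟨2 ^ (k - 1), fun n hn y => ?_⟩
    calc _ ≤ _ := card_cyc_fiber_le_card_ncyc_fiber (m := n + k - 1) (by omega) (by omega)
          (by omega) f y
      _ = 2 ^ (k - 1) := hbal _ _ _
end

section
/- If f : F_2^k → F_2 is an almost lifting, then for every n ≥ k and every y ∈ F_2^n, the cyclic induced map F : F_2^n → F_2^n satisfies |F^{-1}(y)| ≤ 2^{k-1}; that is, ℓ(f) ≤ 2^{k-1}. -/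
/-!
Tensor-power trick. Let `N` be the size of the fiber of `y` under the cyclic map on `F_2^n`.
Concatenating `t` preimages of `y` gives `N^t` distinct words of length `t n`. The cyclic image of
such a word equals `y` at every position whose window of length `k` stays inside one block, so it
is free only at the `t (k - 1)` positions whose window straddles a block boundary. These images
take at most `2^{t (k - 1)}` values, each with at most `L` preimages by the almost-lifting bound,
so `N^t ≤ L 2^{t (k - 1)}` for every `t`, which forces `N ≤ 2^{k - 1}`.
-/

open Finset

theorem Finset.card_le_pow_card_of_eqOn_compl {ι β : Type*} [DecidableEq ι] [Fintype β]
    (S : Finset (ι → β)) (W : Finset ι) (hS : ∀ z ∈ S, ∀ z' ∈ S, Set.EqOn z z' (↑W)ᶜ) :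
    #S ≤ Fintype.card β ^ #W := by
  calc #S ≤ #(univ : Finset (W → β)) := by
        refine card_le_card_of_injOn (fun z i => z i) (fun _ _ => mem_coe.2 (mem_univ _)) ?_
        intro z hz z' hz' hzz'
        funext i
        by_cases hi : i ∈ W
        · exact congrFun hzz' ⟨i, hi⟩
        · exact hS z hz z' hz' hi
    _ = Fintype.card β ^ #W := by simp

theorem Nat.le_of_forall_pow_le_mul_pow {N D L : ℕ} (hD : 0 < D)
    (h : ∀ t, 0 < t → N ^ t ≤ L * D ^ t) : N ≤ D := by
  by_contra! hDN
  have hq : (1 : ℚ) < N / D := by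
    rw [one_lt_div (by exact_mod_cast hD)]; exact_mod_cast hDN
  obtain ⟨t, ht⟩ := pow_unbounded_of_one_lt (L : ℚ) hq
  have hle : ((N : ℚ) / D) ^ (t + 1) ≤ L := by
    rw [div_pow, div_le_iff₀ (by positivity)]
    exact_mod_cast h (t + 1) t.succ_pos
  have hmono : ((N : ℚ) / D) ^ t ≤ (N / D) ^ (t + 1) := pow_le_pow_right₀ hq.le t.le_succ
  linarith

/-- Block `b` occupies the positions `b * n, …, b * n + n - 1`. -/
def blockConcat (α : Type*) (t n : ℕ) : (Fin t → Fin n → α) ≃ (Fin (t * n) → α) :=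
  (Equiv.curry _ _ _).symm.trans (finProdFinEquiv.arrowCongr (Equiv.refl α))

theorem blockConcat_apply_finProdFinEquiv {α : Type*} {t n : ℕ} (x : Fin t → Fin n → α)
    (b : Fin t) (r : Fin n) : blockConcat α t n x (finProdFinEquiv (b, r)) = x b r := by
  simp [blockConcat]

def cycFiber {k n : ℕ} (f : (Fin k → Bool) → Bool) (y : Fin n → Bool) : Finset (Fin n → Bool) :=
  univ.filter fun x => cyc f x = y

section CyclicMap

variable {k n t : ℕ} (f : (Fin k → Bool) → Bool)

theorem cyc_blockConcat_of_add_le (x : Fin t → Fin n → Bool) (b : Fin t) (r : Fin n)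
    (hr : r + k ≤ n) : cyc f (blockConcat Bool t n x) (finProdFinEquiv (b, r)) = cyc f (x b) r := by
  simp only [cyc]
  congr 1
  funext j
  have hrj : (r + j : ℕ) < n := by omega
  have hbt : n * b + n ≤ t * n := by nlinarith [b.isLt]
  rw [← blockConcat_apply_finProdFinEquiv x b ⟨(r + j) % n, Nat.mod_lt _ r.pos⟩]
  refine congrArg (blockConcat Bool t n x) (Fin.ext ?_)
  simp only [finProdFinEquiv_apply_val, Nat.mod_eq_of_lt hrj]
  rw [Nat.mod_eq_of_lt (by omega)]
  omega

def wrapPositions (k t n : ℕ) : Finset (Fin (t * n)) :=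
  (univ ×ˢ univ.filter fun r : Fin n => n < r + k).map finProdFinEquiv.toEmbedding

theorem card_wrapPositions_le : #(wrapPositions k t n) ≤ t * (k - 1) := by
  rw [wrapPositions, card_map, card_product, card_univ, Fintype.card_fin]
  refine Nat.mul_le_mul_left t ?_
  calc #(univ.filter fun r : Fin n => n < r + k)
      = #((univ.filter fun r : Fin n => n < r + k).map Fin.valEmbedding) := (card_map _).symm
    _ ≤ #(Ico (n + 1 - k) n) := card_le_card fun i hi => by
        simp only [mem_map, mem_filter, mem_univ, true_and, Fin.valEmbedding_apply] at hi
        obtain ⟨r, hr, rfl⟩ := hi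
        simp only [mem_Ico]
        omega
    _ ≤ k - 1 := by rw [Nat.card_Ico]; omega

theorem card_cycFiber_pow_le (y : Fin n → Bool) {L : ℕ}
    (hL : ∀ y' : Fin (t * n) → Bool, #(cycFiber f y') ≤ L) :
    #(cycFiber f y) ^ t ≤ L * (2 ^ (k - 1)) ^ t := by
  set dom := Fintype.piFinset fun _ : Fin t => cycFiber f y
  set Θ := fun x => cyc f (blockConcat Bool t n x)
  have hfiber : ∀ y' ∈ dom.image Θ, #{x ∈ dom | Θ x = y'} ≤ L := fun y' _ =>
    (card_le_card_of_injOn (blockConcat Bool t n)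
      (fun x hx => by simpa [cycFiber] using (mem_filter.1 hx).2)
      (fun _ _ _ _ h => (blockConcat Bool t n).injective h)).trans (hL y')
  have himage : #(dom.image Θ) ≤ (2 ^ (k - 1)) ^ t := by
    refine (card_le_pow_card_of_eqOn_compl _ (wrapPositions k t n) ?_).trans ?_
    · intro z hz z' hz' p hp
      obtain ⟨x, hx, rfl⟩ := mem_image.1 hz
      obtain ⟨x', hx', rfl⟩ := mem_image.1 hz'
      obtain ⟨⟨b, r⟩, rfl⟩ := finProdFinEquiv.surjective p
      have hr : r + k ≤ n := by
        simpa [wrapPositions, mem_map_equiv] using hp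
      simp only [dom, Fintype.mem_piFinset, cycFiber, mem_filter, mem_univ, true_and] at hx hx'
      simp only [Θ, cyc_blockConcat_of_add_le f _ b r hr, hx, hx']
    · rw [Fintype.card_bool, ← pow_mul']
      exact Nat.pow_le_pow_right two_pos card_wrapPositions_le
  calc #(cycFiber f y) ^ t = #dom := by simp [dom]
    _ ≤ L * #(dom.image Θ) := card_le_mul_card_image dom L hfiber
    _ ≤ L * (2 ^ (k - 1)) ^ t := Nat.mul_le_mul_left L himage

end CyclicMap

/-- If `f` is an almost lifting, then every fiber of every cyclic induced map has
size at most `2^{k-1}`, i.e. `ℓ(f) ≤ 2^{k-1}`. -/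
theorem stmt9 {k : ℕ} (f : (Fin k → Bool) → Bool)
    (halmost : ∃ L : ℕ, ∀ n : ℕ, k ≤ n → ∀ y : Fin n → Bool,
      (Finset.univ.filter fun x : Fin n → Bool => cyc f x = y).card ≤ L) :
    ∀ n : ℕ, k ≤ n → ∀ y : Fin n → Bool,
      (Finset.univ.filter fun x : Fin n → Bool => cyc f x = y).card ≤ 2 ^ (k - 1) := by
  obtain ⟨L, hL⟩ := halmost
  intro n hk y
  refine Nat.le_of_forall_pow_le_mul_pow (L := L) (by positivity) fun t ht => ?_
  exact card_cycFiber_pow_le f y fun y' => hL (t * n) (hk.trans (Nat.le_mul_of_pos_left n ht)) y'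
end

section
/- If the non-wrapping induced maps F_{(m)} : F_2^m → F_2^{m-k+1} are balanced for all m ≥ k, then for every n ≥ k and every finite bit string y of length n, there exists a periodic doubly-infinite string x (of some period dividing at most 2^k·n) such that the cellular automaton F : F_2^Z → F_2^Z induced by f maps x to a periodic string containing y; in particular F restricted to the set P of periodic doubly-infinite strings is surjective onto P. -/
/-- The cellular automaton on doubly-infinite strings induced by `f`. -/
def caMap {k : ℕ} (f : (Fin k → Bool) → Bool) (x : ℤ → Bool) : ℤ → Bool :=
  fun i => f fun j => x (i + (j.val : ℤ))

/-- A doubly-infinite string is periodic with period `p`. -/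
def IsPeriodic (x : ℤ → Bool) (p : ℤ) : Prop := 0 < p ∧ ∀ i, x (i + p) = x i

section

variable {k : ℕ} {f : (Fin k → Bool) → Bool}

theorem ncyc_surjective_of_card_fiber {m : ℕ} (hm : k ≤ m)
    (hbal : ∀ y : Fin (m - k + 1) → Bool,
      (Finset.univ.filter fun x : Fin m → Bool => ncyc hm f x = y).card = 2 ^ (k - 1)) :
    Function.Surjective (ncyc hm f) := by
  intro y
  obtain ⟨x, hx⟩ := Finset.card_pos.mp (hbal y ▸ Nat.two_pow_pos _)
  exact ⟨x, (Finset.mem_filter.mp hx).2⟩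

theorem pos_of_ncyc_surjective (hsurj : ∀ m (hm : k ≤ m), Function.Surjective (ncyc hm f)) :
    0 < k := by
  by_contra hk
  obtain rfl : k = 0 := by omega
  obtain ⟨x, hx⟩ := hsurj 1 (by omega) fun i => decide (i.val = 0)
  have h0 := congrFun hx ⟨0, by omega⟩
  have h1 := congrFun hx ⟨1, by omega⟩
  simp only [ncyc, Subsingleton.elim (α := Fin 0 → Bool) _ finZeroElim] at h0 h1
  simp_all

theorem exists_caMap_eqOn (hsurj : ∀ m (hm : k ≤ m), Function.Surjective (ncyc hm f))
    (L : ℕ) (Y : ℤ → Bool) :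
    ∃ W : ℤ → Bool, ∀ i : ℤ, 0 ≤ i → i < L → caMap f W i = Y i := by
  obtain ⟨w, hw⟩ := hsurj (L + k) (by omega) fun i => Y i.val
  refine ⟨fun i => if h : i.toNat < L + k then w ⟨i.toNat, h⟩ else false, fun i hi0 hiL => ?_⟩
  lift i to ℕ using hi0
  have hi : i < L + k - k + 1 := by omega
  rw [← congrFun hw ⟨i, hi⟩]
  unfold caMap ncyc
  congr 1
  funext j
  have hj := j.isLt
  simp only [← Nat.cast_add, Int.toNat_natCast]
  rw [dif_pos (by omega)]

theorem caMap_emod_repeat (W : ℤ → Bool) {a p : ℤ} (hkp : k ≤ p)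
    (hmatch : ∀ t : ℤ, 0 ≤ t → t < k → W (a + p + t) = W (a + t)) (i : ℤ) :
    caMap f (fun i => W (a + i % p)) i = caMap f W (a + i % p) := by
  unfold caMap
  congr 1
  funext j
  have hj : (j.val : ℤ) < k := by exact_mod_cast j.isLt
  have hp : 0 < p := by omega
  have hs0 := Int.emod_nonneg i hp.ne'
  have hsp := Int.emod_lt_of_pos i hp
  show W (a + (i + j) % p) = _
  rw [Int.add_emod, Int.emod_eq_of_lt (Int.natCast_nonneg _) (by omega : (j.val : ℤ) < p)]
  by_cases hwrap : i % p + j < p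
  · rw [Int.emod_eq_of_lt (by omega) hwrap, add_assoc]
  · rw [show i % p + j = (i % p + j - p) + p by ring, ← Int.emod_eq_add_self_emod,
      Int.emod_eq_of_lt (by omega) (by omega), ← hmatch _ (by omega) (by omega)]
    ring_nf

theorem exists_periodic_caMap_eq (hsurj : ∀ m (hm : k ≤ m), Function.Surjective (ncyc hm f))
    {n : ℕ} (hkn : k ≤ n) {Y : ℤ → Bool} (hY : Function.Periodic Y n) :
    ∃ (x : ℤ → Bool) (p : ℤ), IsPeriodic x p ∧ p ≤ 2 ^ k * n ∧ caMap f x = Y := by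
  have hn : 0 < n := (pos_of_ncyc_surjective hsurj).trans_le hkn
  obtain ⟨W, hW⟩ := exists_caMap_eqOn hsurj (2 ^ k * n) Y
  let window : Fin (2 ^ k + 1) → Fin k → Bool := fun u t => W (u.val * n + t.val)
  obtain ⟨u, v, huv, hwin⟩ : ∃ u v : Fin (2 ^ k + 1), u < v ∧ window u = window v := by
    obtain ⟨u, v, hne, h⟩ := Fintype.exists_ne_map_eq_of_card_lt window (by simp)
    rcases hne.lt_or_gt with huv | hvu
    exacts [⟨u, v, huv, h⟩, ⟨v, u, hvu, h.symm⟩]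
  set a : ℤ := u.val * n
  set p : ℤ := (v.val - u.val : ℤ) * n
  have hmatch : ∀ t : ℤ, 0 ≤ t → t < k → W (a + p + t) = W (a + t) := by
    intro t ht0 htk
    lift t to ℕ using ht0
    have := congrFun hwin ⟨t, by omega⟩
    simp only [window] at this
    convert this.symm using 2; ring
  have huv' : (u.val : ℤ) + 1 ≤ v.val := by exact_mod_cast huv
  have hv : (v.val : ℤ) ≤ 2 ^ k := by exact_mod_cast Nat.lt_succ_iff.mp v.isLt
  have hnp : (n : ℤ) ≤ p := by nlinarith
  have hap : a + p ≤ 2 ^ k * n := by nlinarith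
  refine ⟨fun i => W (a + i % p), p, ⟨by omega, fun i => by simp⟩, by nlinarith, ?_⟩
  funext i
  have hs0 := Int.emod_nonneg i (by omega : p ≠ 0)
  have hsp := Int.emod_lt_of_pos i (by omega : 0 < p)
  have hphase : a + i % p = i + ((u.val : ℤ) - (v.val - u.val) * (i / p)) * n := by
    rw [Int.emod_def]; ring
  rw [caMap_emod_repeat W (by omega) hmatch, hW _ (by positivity) (by push_cast; omega), hphase]
  exact hY.int_mul _ i

end

open Fin.CommRing in
theorem exists_periodic_extension {n : ℕ} (hn : 0 < n) (y : Fin n → Bool) :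
    ∃ Y : ℤ → Bool, Function.Periodic Y n ∧ ∀ i : Fin n, Y i = y i := by
  have : NeZero n := ⟨hn.ne'⟩
  exact ⟨fun i => y i, fun i => by simp, fun i => by simp⟩

/-- If all non-wrapping induced maps are balanced, then every finite string of length
`n ≥ k` appears in the image under the cellular automaton of some periodic string of
period at most `2^k·n`; in particular the cellular automaton maps the set of periodic
strings onto itself. -/
theorem stmt11 {k : ℕ} (f : (Fin k → Bool) → Bool)
    (hbal : ∀ (m : ℕ) (hm : k ≤ m) (y : Fin (m - k + 1) → Bool),
      (Finset.univ.filter fun x : Fin m → Bool => ncyc hm f x = y).card = 2 ^ (k - 1)) :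
    (∀ n : ℕ, k ≤ n → ∀ y : Fin n → Bool,
      ∃ (x : ℤ → Bool) (p : ℤ), IsPeriodic x p ∧ p ≤ 2 ^ k * n ∧
        (∃ q : ℤ, IsPeriodic (caMap f x) q) ∧
        (∃ t : ℤ, ∀ i : Fin n, caMap f x (t + (i.val : ℤ)) = y i)) ∧
    (∀ y : ℤ → Bool, (∃ q : ℤ, IsPeriodic y q) →
      ∃ x : ℤ → Bool, (∃ p : ℤ, IsPeriodic x p) ∧ caMap f x = y) := by
  have hsurj m (hm : k ≤ m) : Function.Surjective (ncyc hm f) :=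
    ncyc_surjective_of_card_fiber hm (hbal m hm)
  have hk : 0 < k := pos_of_ncyc_surjective hsurj
  refine ⟨fun n hkn y => ?_, fun y ⟨q, hq, hyq⟩ => ?_⟩
  · obtain ⟨Y, hY, hYy⟩ := exists_periodic_extension (hk.trans_le hkn) y
    obtain ⟨x, p, hx, hpn, hxY⟩ := exists_periodic_caMap_eq hsurj hkn hY
    refine ⟨x, p, hx, hpn, ⟨n, by omega, hxY ▸ hY⟩, 0, fun i => ?_⟩
    rw [hxY, zero_add, hYy]
  · have hkq : ((k * q.toNat : ℕ) : ℤ) = k * q := by push_cast; rw [Int.toNat_of_nonneg hq.le]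
    obtain ⟨x, p, hx, -, hxy⟩ := exists_periodic_caMap_eq hsurj (n := k * q.toNat)
      (Nat.le_mul_of_pos_right _ (by omega))
      (hkq ▸ Function.Periodic.nat_mul hyq k)
    exact ⟨x, ⟨p, hx⟩, hxy⟩
end

section
/- If f : F_2^k → F_2 depends nonlinearly on exactly m of its variables (i.e., f(x) ⊕ (linear part) depends on only m variables), then for every n ≥ k the shift-invariant induced map F : F_2^n → F_2^n has differential uniformity at least 2^{n-m}. -/
/-- Coordinatewise xor of bit vectors. -/
def vxor {n : ℕ} (a b : Fin n → Bool) : Fin n → Bool := fun i => xor (a i) (b i)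

/-- Number of solutions of the differential equation `F(x⊕a) ⊕ F(x) = b`. -/
def diffCount {k n : ℕ} (f : (Fin k → Bool) → Bool) (a b : Fin n → Bool) : ℕ :=
  (Finset.univ.filter fun x : Fin n → Bool =>
    vxor (cyc f (vxor x a)) (cyc f x) = b).card

/-- The differential uniformity of the map induced by `f`. -/
def du {k : ℕ} (n : ℕ) (f : (Fin k → Bool) → Bool) : ℕ :=
  (Finset.univ.filter fun a : Fin n → Bool => a ≠ fun _ => false).sup fun a =>
    Finset.univ.sup fun b : Fin n → Bool => diffCount f a b

/-- `f` depends nonlinearly on `x_j`: the derivative of `f` in direction `e_j` is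
nonconstant. -/
def NonlinearIn {k : ℕ} (f : (Fin k → Bool) → Bool) (j : Fin k) : Prop :=
  ∃ x x' : Fin k → Bool,
    xor (f x) (f (Function.update x j (!(x j)))) ≠
    xor (f x') (f (Function.update x' j (!(x' j))))

instance {k : ℕ} (f : (Fin k → Bool) → Bool) : DecidablePred (NonlinearIn f) :=
  fun j => by unfold NonlinearIn; infer_instance

/-- If `f` depends nonlinearly on exactly `m` variables, the induced map on `n` bits
has differential uniformity at least `2^{n-m}`. -/
theorem stmt16 {k n m : ℕ} (hk : 0 < k) (hkn : k ≤ n) (f : (Fin k → Bool) → Bool)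
    (hm : (Finset.univ.filter fun j : Fin k => NonlinearIn f j).card = m) :
    2 ^ (n - m) ≤ du n f := by
  classical
  have hn : 0 < n := lt_of_lt_of_le hk hkn
  have hmk : m ≤ k := by
    rw [← hm]
    calc (Finset.univ.filter fun j : Fin k => NonlinearIn f j).card
        ≤ (Finset.univ : Finset (Fin k)).card := Finset.card_filter_le _ _
      _ = k := by simp
  have hmn : m ≤ n := hmk.trans hkn
  -- the difference direction: a single bit flip at position 0
  set a : Fin n → Bool := fun i => decide (i.val = 0) with ha
  set D : (Fin n → Bool) → (Fin n → Bool) :=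
    fun x => vxor (cyc f (vxor x a)) (cyc f x) with hD
  set T : Finset (Fin n) := (Finset.univ.filter fun j : Fin k => NonlinearIn f j).image
    (fun j : Fin k => (⟨(n - j.val) % n, Nat.mod_lt _ hn⟩ : Fin n)) with hT
  have hTcard : T.card ≤ m := hm ▸ Finset.card_image_le
  -- mod arithmetic helper
  have hmod : ∀ (i : Fin n) (j : Fin k), (i.val + j.val) % n = 0 →
      i.val + j.val = 0 ∨ i.val + j.val = n := by
    intro i j hij
    by_cases hlt : i.val + j.val < n
    · left; rwa [Nat.mod_eq_of_lt hlt] at hij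
    · right
      have h1 : i.val + j.val - n < n := by
        have := i.isLt; have := j.isLt; omega
      rw [Nat.mod_eq_sub_mod (le_of_not_gt hlt), Nat.mod_eq_of_lt h1] at hij
      omega
  -- constancy of D off T
  have key : ∀ i : Fin n, i ∉ T → ∀ x y : Fin n → Bool, D x i = D y i := by
    intro i hiT x y
    have hDi : ∀ z : Fin n → Bool, D z i =
        xor (f fun j => vxor z a ⟨(i.val + j.val) % n, Nat.mod_lt _ hn⟩)
            (f fun j => z ⟨(i.val + j.val) % n, Nat.mod_lt _ hn⟩) := by
      intro z; rfl
    by_cases h0 : ∃ j : Fin k, (i.val + j.val) % n = 0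
    · obtain ⟨j₀, hj₀⟩ := h0
      have huniq : ∀ j : Fin k, (i.val + j.val) % n = 0 → j = j₀ := by
        intro j hj
        have h1 := hmod i j hj
        have h2 := hmod i j₀ hj₀
        have := j.isLt; have := j₀.isLt; have := i.isLt
        exact Fin.ext (by omega)
      have hival : i.val = (n - j₀.val) % n := by
        rcases hmod i j₀ hj₀ with h | h
        · have : i.val = 0 := by omega
          have : j₀.val = 0 := by omega
          simp [*]
        · have hj0pos : 0 < j₀.val := by
            have := i.isLt; omega
          rw [Nat.mod_eq_of_lt (by omega)]; omega
      have hnl : ¬ NonlinearIn f j₀ := by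
        intro hcon
        apply hiT
        rw [hT]
        exact Finset.mem_image.2 ⟨j₀, Finset.mem_filter.2 ⟨Finset.mem_univ _, hcon⟩,
          Fin.ext hival.symm⟩
      unfold NonlinearIn at hnl
      push_neg at hnl
      have hwin : ∀ z : Fin n → Bool,
          (fun j => vxor z a ⟨(i.val + j.val) % n, Nat.mod_lt _ hn⟩) =
          Function.update (fun j => z ⟨(i.val + j.val) % n, Nat.mod_lt _ hn⟩) j₀
            (!((fun j => z ⟨(i.val + j.val) % n, Nat.mod_lt _ hn⟩) j₀)) := by
        intro z
        funext j
        by_cases hj : j = j₀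
        · subst hj
          rw [Function.update_self]
          show xor (z _) (a _) = _
          rw [ha]
          simp [hj₀]
        · rw [Function.update_of_ne hj]
          show xor (z _) (a _) = _
          have : ((i.val + j.val) % n) ≠ 0 := fun hc => hj (huniq j hc)
          rw [ha]
          simp [this]
      have calc1 : ∀ z : Fin n → Bool, D z i =
          xor (f fun j => z ⟨(i.val + j.val) % n, Nat.mod_lt _ hn⟩)
              (f (Function.update (fun j => z ⟨(i.val + j.val) % n, Nat.mod_lt _ hn⟩) j₀
                (!((fun j => z ⟨(i.val + j.val) % n, Nat.mod_lt _ hn⟩) j₀)))) := by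
        intro z
        rw [hDi z, hwin z, Bool.xor_comm]
      rw [calc1 x, calc1 y]
      exact hnl _ _
    · push_neg at h0
      have hwin : ∀ z : Fin n → Bool,
          (fun j : Fin k => vxor z a ⟨(i.val + j.val) % n, Nat.mod_lt _ hn⟩) =
          (fun j : Fin k => z ⟨(i.val + j.val) % n, Nat.mod_lt _ hn⟩) := by
        intro z
        funext j
        show xor (z _) (a _) = _
        rw [ha]
        simp [h0 j]
      rw [hDi x, hDi y, hwin x, hwin y, Bool.xor_self, Bool.xor_self]
  -- pigeonhole on the restriction of D to T
  set φ : (Fin n → Bool) → ({i // i ∈ T} → Bool) := fun x => fun i => D x i.1 with hφ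
  have hcard : (Finset.univ : Finset ({i // i ∈ T} → Bool)).card * 2 ^ (n - m) ≤
      (Finset.univ : Finset (Fin n → Bool)).card := by
    rw [Finset.card_univ, Finset.card_univ, Fintype.card_fun, Fintype.card_fun]
    simp only [Fintype.card_coe, Fintype.card_fin, Fintype.card_bool]
    calc 2 ^ T.card * 2 ^ (n - m) = 2 ^ (T.card + (n - m)) := (pow_add 2 _ _).symm
      _ ≤ 2 ^ n := Nat.pow_le_pow_right (by norm_num) (by omega)
  obtain ⟨v, -, hv⟩ := Finset.exists_le_card_fiber_of_mul_le_card_of_maps_to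
    (fun x _ => Finset.mem_univ (φ x)) Finset.univ_nonempty hcard
  set b : Fin n → Bool := fun i => if h : i ∈ T then v ⟨i, h⟩ else D (fun _ => false) i with hb
  have hsub : (Finset.univ.filter fun x => φ x = v) ⊆
      (Finset.univ.filter fun x : Fin n → Bool => D x = b) := by
    intro x hx
    rw [Finset.mem_filter] at hx ⊢
    refine ⟨Finset.mem_univ _, ?_⟩
    funext i
    by_cases hi : i ∈ T
    · have : φ x ⟨i, hi⟩ = v ⟨i, hi⟩ := by rw [hx.2]
      rw [hb]
      simpa [hφ, hi] using this
    · rw [hb]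
      simp only [hi, dif_neg, not_false_iff]
      exact key i hi x _
  have hcount : 2 ^ (n - m) ≤ diffCount f a b := by
    calc 2 ^ (n - m) ≤ (Finset.univ.filter fun x => φ x = v).card := hv
      _ ≤ (Finset.univ.filter fun x : Fin n → Bool => D x = b).card :=
          Finset.card_le_card hsub
      _ = diffCount f a b := rfl
  -- conclude
  have haneq : a ≠ fun _ => false := by
    intro hc
    have : a ⟨0, hn⟩ = false := by rw [hc]
    rw [ha] at this
    simp at this
  calc 2 ^ (n - m) ≤ diffCount f a b := hcount
    _ ≤ Finset.univ.sup fun b : Fin n → Bool => diffCount f a b :=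
        Finset.le_sup (Finset.mem_univ b)
    _ ≤ du n f := Finset.le_sup
        (f := fun a : Fin n → Bool => Finset.univ.sup fun b : Fin n → Bool => diffCount f a b)
        (Finset.mem_filter.2 ⟨Finset.mem_univ _, haneq⟩)
end

section
/- For the Keccak function χ(x_1,x_2,x_3) = x_1 ⊕ (x_2 ⊕ 1)x_3 and odd n ≥ 3, the induced shift-invariant map F : F_2^n → F_2^n is a bijection. -/
/-- The Keccak `χ` function: `χ(x₁,x₂,x₃) = x₁ ⊕ (x₂ ⊕ 1)·x₃`. -/
def chi : (Fin 3 → Bool) → Bool := fun x => xor (x 0) (!(x 1) && x 2)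


lemma chi_formula (n : ℕ) (hn0 : 0 < n) (x : Fin n → Bool) (m : ℕ) :
    cyc chi x ⟨m % n, Nat.mod_lt _ hn0⟩ =
      xor (x ⟨m % n, Nat.mod_lt _ hn0⟩)
        (!(x ⟨(m+1) % n, Nat.mod_lt _ hn0⟩) && x ⟨(m+2) % n, Nat.mod_lt _ hn0⟩) := by
  have h0 : ((0 : Fin 3) : ℕ) = 0 := rfl
  have h1 : ((1 : Fin 3) : ℕ) = 1 := rfl
  have h2 : ((2 : Fin 3) : ℕ) = 2 := rfl
  have hmm : m % n % n = m % n := Nat.mod_mod_of_dvd _ dvd_rfl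
  simp only [cyc, chi, h0, h1, h2, Nat.add_zero, Nat.mod_add_mod, hmm]

lemma bool_step (a b c d : Bool) :
    a = xor (xor a (!b && c)) (!(xor b (!c && d)) && c) := by
  revert a b c d; decide

lemma bool_diff (u y c c' : Bool) (h : xor u (!y && c) ≠ xor u (!y && c')) :
    y = false ∧ c ≠ c' := by revert u y c c' ; decide

lemma chi_rec (n : ℕ) (hn0 : 0 < n) (x : Fin n → Bool) (m : ℕ) :
    x ⟨m % n, Nat.mod_lt _ hn0⟩ =
      xor (cyc chi x ⟨m % n, Nat.mod_lt _ hn0⟩)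
        (!(cyc chi x ⟨(m+1) % n, Nat.mod_lt _ hn0⟩) && x ⟨(m+2) % n, Nat.mod_lt _ hn0⟩) := by
  rw [chi_formula n hn0 x m, chi_formula n hn0 x (m+1)]
  have e1 : m + 1 + 1 = m + 2 := rfl
  have e2 : m + 1 + 2 = m + 3 := rfl
  rw [e1, e2]
  exact bool_step _ _ _ _

lemma step2 (n K : ℕ) (hK : n = 2 * K + 1) (a b : ℕ) :
    ∃ t, (a + 2 * t) % n = b % n := by
  have hn0 : 0 < n := by omega
  set s := n - a % n + b % n with hs
  refine ⟨(K + 1) * s, ?_⟩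
  have ha' : a % n < n := Nat.mod_lt _ hn0
  have h1 : n + 1 ≡ 1 [MOD n] := Nat.add_mod_left n 1
  have hmod : ∀ c : ℕ, c ≡ c % n [MOD n] := fun c => (Nat.mod_modEq c n).symm
  have e : a + 2 * ((K + 1) * s) = a + (n + 1) * s := by
    rw [← Nat.mul_assoc]
    congr 2
    omega
  show a + 2 * ((K + 1) * s) ≡ b [MOD n]
  calc a + 2 * ((K + 1) * s) = a + (n + 1) * s := e
    _ ≡ a + 1 * s [MOD n] := Nat.ModEq.add_left a (Nat.ModEq.mul_right s h1)
    _ = a + s := by ring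
    _ ≡ a % n + s [MOD n] := Nat.ModEq.add_right s (hmod a)
    _ = n + b % n := by omega
    _ ≡ b % n [MOD n] := Nat.add_mod_left n (b % n)
    _ ≡ b [MOD n] := (hmod b).symm

/-- For odd `n ≥ 3`, the shift-invariant map induced by `χ` is a bijection. -/
theorem stmt18 (n : ℕ) (hn : 3 ≤ n) (hodd : Odd n) :
    Function.Bijective (cyc chi : (Fin n → Bool) → Fin n → Bool) := by
  rw [← Finite.injective_iff_bijective]
  intro x z hxz
  have hn0 : 0 < n := by omega
  obtain ⟨K, hK⟩ := hodd
  have hK' : n = 2 * K + 1 := by omega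
  funext i
  by_contra hne
  -- residue invariance
  have hres : ∀ (w : Fin n → Bool) (a b : ℕ), a % n = b % n →
      w ⟨a % n, Nat.mod_lt _ hn0⟩ = w ⟨b % n, Nat.mod_lt _ hn0⟩ := by
    intro w a b h
    congr 1
    exact Fin.ext h
  have hres' : ∀ (w : Fin n → Bool) (a b : ℕ), a = b →
      w ⟨a % n, Nat.mod_lt _ hn0⟩ = w ⟨b % n, Nat.mod_lt _ hn0⟩ := by
    intro w a b h
    exact hres w a b (by rw [h])
  -- propagation of a difference
  have hdiff : ∀ m : ℕ, x ⟨m % n, Nat.mod_lt _ hn0⟩ ≠ z ⟨m % n, Nat.mod_lt _ hn0⟩ →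
      cyc chi x ⟨(m+1) % n, Nat.mod_lt _ hn0⟩ = false ∧
      x ⟨(m+2) % n, Nat.mod_lt _ hn0⟩ ≠ z ⟨(m+2) % n, Nat.mod_lt _ hn0⟩ := by
    intro m hm
    have h1 := chi_rec n hn0 x m
    have h2 := chi_rec n hn0 z m
    rw [← hxz] at h2
    exact bool_diff _ _ _ _ (by rw [← h1, ← h2]; exact hm)
  -- base difference at i.val
  have hbase : x ⟨i.val % n, Nat.mod_lt _ hn0⟩ ≠ z ⟨i.val % n, Nat.mod_lt _ hn0⟩ := by
    have hi : (⟨i.val % n, Nat.mod_lt _ hn0⟩ : Fin n) = i :=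
      Fin.ext (Nat.mod_eq_of_lt i.isLt)
    rw [hi]
    exact hne
  -- difference propagates along even steps
  have hsteps : ∀ t : ℕ, x ⟨(i.val + 2*t) % n, Nat.mod_lt _ hn0⟩ ≠
      z ⟨(i.val + 2*t) % n, Nat.mod_lt _ hn0⟩ := by
    intro t
    induction t with
    | zero => simpa using hbase
    | succ t ih =>
      have h := (hdiff _ ih).2
      have e : i.val + 2*t + 2 = i.val + 2*(t+1) := by ring
      rw [hres' x _ _ e, hres' z _ _ e] at h
      exact h
  -- hence all outputs are false
  have hYall : ∀ m : ℕ, cyc chi x ⟨m % n, Nat.mod_lt _ hn0⟩ = false := by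
    intro m
    obtain ⟨t, ht⟩ := step2 n K hK' (i.val + 1) m
    have h := (hdiff _ (hsteps t)).1
    have e : (i.val + 2*t + 1) % n = m % n := by
      rw [show i.val + 2*t + 1 = i.val + 1 + 2*t by ring, ht]
    rw [hres (cyc chi x) _ _ e] at h
    exact h
  have hYallz : ∀ m : ℕ, cyc chi z ⟨m % n, Nat.mod_lt _ hn0⟩ = false := by
    intro m; rw [← hxz]; exact hYall m
  -- x is 2-periodic, hence constant
  have hconst : ∀ (w : Fin n → Bool),
      (∀ m : ℕ, cyc chi w ⟨m % n, Nat.mod_lt _ hn0⟩ = false) →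
      ∀ a b : ℕ, w ⟨a % n, Nat.mod_lt _ hn0⟩ = w ⟨b % n, Nat.mod_lt _ hn0⟩ := by
    intro w hY a b
    have h2 : ∀ m : ℕ, w ⟨m % n, Nat.mod_lt _ hn0⟩ = w ⟨(m+2) % n, Nat.mod_lt _ hn0⟩ := by
      intro m
      have h := chi_rec n hn0 w m
      rw [hY m, hY (m+1)] at h
      simpa using h
    have h2t : ∀ t : ℕ, w ⟨a % n, Nat.mod_lt _ hn0⟩ = w ⟨(a + 2*t) % n, Nat.mod_lt _ hn0⟩ := by
      intro t
      induction t with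
      | zero => exact hres' w a (a + 2*0) (by ring)
      | succ t ih =>
        rw [ih, h2 (a + 2*t)]
        exact hres' w _ _ (by ring)
    obtain ⟨t, ht⟩ := step2 n K hK' a b
    rw [h2t t]
    exact hres w _ _ ht
  -- each constant must be false
  have hval : ∀ (w : Fin n → Bool),
      (∀ m : ℕ, cyc chi w ⟨m % n, Nat.mod_lt _ hn0⟩ = false) →
      w ⟨i.val % n, Nat.mod_lt _ hn0⟩ = false := by
    intro w hY
    have hf := chi_formula n hn0 w i.val
    rw [hY i.val,
      hconst w hY (i.val + 1) i.val, hconst w hY (i.val + 2) i.val] at hf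
    revert hf
    cases w ⟨i.val % n, Nat.mod_lt _ hn0⟩ <;> simp
  exact hbase (by rw [hval x hYall, hval z hYallz])
end

section
/- For the function f(x_1,x_2,x_3,x_4) = x_2 ⊕ x_1·(x_3 ⊕ 1)·x_4 and every n ≥ 4, the induced shift-invariant map F : F_2^n → F_2^n is a bijection (i.e., f is a proper lifting). -/
/-- Patt's function `f(x₁,x₂,x₃,x₄) = x₂ ⊕ x₁·(x₃ ⊕ 1)·x₄`. -/
def pattF : (Fin 4 → Bool) → Bool := fun x => xor (x 1) (x 0 && !(x 2) && x 3)

set_option maxRecDepth 10000 in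
/-- Patt's rule is its own inverse, up to a shift by 2: on any window of
length 7, applying the rule twice yields the bit at position 2. -/
lemma pattF_key : ∀ w : Fin 7 → Bool,
    pattF (fun j => pattF (fun l =>
      w ⟨j.val + l.val, by have := j.isLt; have := l.isLt; omega⟩)) = w 2 := by
  decide

lemma cyc_cyc (n : ℕ) (x : Fin n → Bool) (i : Fin n) :
    cyc pattF (cyc pattF x) i = x ⟨(i.val + 2) % n, Nat.mod_lt _ i.pos⟩ := by
  have hpos : 0 < n := i.pos
  have := pattF_key (fun t : Fin 7 => x ⟨(i.val + t.val) % n, Nat.mod_lt _ hpos⟩)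
  simp only at this
  rw [show (2 : Fin 7).val = 2 from rfl] at this
  calc cyc pattF (cyc pattF x) i
      = pattF (fun j => pattF (fun l =>
          x ⟨(i.val + (j.val + l.val)) % n, Nat.mod_lt _ hpos⟩)) := by
        simp only [cyc]
        congr 1
        funext j
        congr 1
        funext l
        congr 1
        exact Fin.ext (by simp [Nat.mod_add_mod, Nat.add_assoc])
    _ = x ⟨(i.val + 2) % n, Nat.mod_lt _ hpos⟩ := this

/-- `x₂ ⊕ x₁(x₃⊕1)x₄` is a proper lifting: the induced shift-invariant map is a
bijection for every `n ≥ 4`. -/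
theorem stmt19 (n : ℕ) (hn : 4 ≤ n) :
    Function.Bijective (cyc pattF : (Fin n → Bool) → Fin n → Bool) := by
  rw [← Finite.injective_iff_bijective]
  intro x y hxy
  have h : ∀ i : Fin n, x ⟨(i.val + 2) % n, Nat.mod_lt _ i.pos⟩
      = y ⟨(i.val + 2) % n, Nat.mod_lt _ i.pos⟩ := by
    intro i
    rw [← cyc_cyc n x i, ← cyc_cyc n y i, hxy]
  funext i
  have hpos : 0 < n := i.pos
  have := h ⟨(i.val + (n - 2)) % n, Nat.mod_lt _ hpos⟩
  have harith : ((i.val + (n - 2)) % n + 2) % n = i.val := by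
    rw [Nat.mod_add_mod]
    have : i.val + (n - 2) + 2 = i.val + n := by omega
    rw [this, Nat.add_mod_right, Nat.mod_eq_of_lt i.isLt]
  simpa [Fin.ext_iff, harith] using this
end
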